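/- Lemma (V-norm bound on P minus the inflated Kalman gain times the observation map). Let Σ be a positive semidefinite self-adjoint operator on H, let R be a symmetric positive semidefinite k×k matrix, let ε ≥ 0 and a > 0, set Q := a·P and K := (Σ + Q) ∘ Hob† ∘ (Hob(Σ + Q)Hob† + ε²R)⁻¹. Then for every v ∈ H: V((P − K ∘ Hob)(v)) ≤ ((√(1+β) · ε² · ‖R‖_op + ‖Σ‖_op)/a) · V(v), where ‖·‖_op denotes the operator (spectral) norm. -/

import Mathlib

/- Common setting for "Long-time accuracy of ensemble Kalman filters". -/

open MeasureTheory ProbabilityTheory Filter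
open scoped RealInnerProductSpace ENNReal NNReal

noncomputable section

namespace EnKF

variable {H : Type*} [NormedAddCommGroup H] [InnerProductSpace ℝ H] [FiniteDimensional ℝ H]

/-- The outer product `u ⊗ v`, acting as `x ↦ ⟪v, x⟫ • u`. -/
def outer (u v : H) : H →L[ℝ] H := (innerSL ℝ v).smulRight u

/-- Trace of a continuous linear operator. -/
def opTrace (T : H →L[ℝ] H) : ℝ := LinearMap.trace ℝ H T.toLinearMap

variable {k : ℕ}

/-- `P := Hob† ∘ Hob`, the orthogonal projection onto the observed subspace. -/
def Pop (Hob : H →L[ℝ] EuclideanSpace ℝ (Fin k)) : H →L[ℝ] H :=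
  (ContinuousLinearMap.adjoint Hob).comp Hob

/-- The Lyapunov norm `V(u) = (‖u‖² + β‖Pu‖²)^(1/2)`. -/
def Vnorm (Hob : H →L[ℝ] EuclideanSpace ℝ (Fin k)) (β : ℝ) (u : H) : ℝ :=
  Real.sqrt (‖u‖ ^ 2 + β * ‖Pop Hob u‖ ^ 2)

/-- The Kalman gain `K(S) = S Hob† (Hob S Hob† + ε² R)⁻¹`. -/
def kalmanGain (Hob : H →L[ℝ] EuclideanSpace ℝ (Fin k))
    (R : EuclideanSpace ℝ (Fin k) →L[ℝ] EuclideanSpace ℝ (Fin k)) (ε : ℝ)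
    (S : H →L[ℝ] H) : EuclideanSpace ℝ (Fin k) →L[ℝ] H :=
  (S.comp (ContinuousLinearMap.adjoint Hob)).comp
    (Ring.inverse ((Hob.comp (S.comp (ContinuousLinearMap.adjoint Hob))) + ε ^ 2 • R))

/-- The standard Gaussian measure on a finite-dimensional inner product space. -/
def stdGaussian (H : Type*) [NormedAddCommGroup H] [InnerProductSpace ℝ H]
    [FiniteDimensional ℝ H] [MeasurableSpace H] [BorelSpace H] : Measure H :=
  Measure.map (fun x : Fin (Module.finrank ℝ H) → ℝ =>
      ∑ i, x i • (stdOrthonormalBasis ℝ H) i)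
    (Measure.pi fun _ => gaussianReal 0 1)

/-- The Gaussian measure on `H` with mean `m` whose covariance is `S ∘ S` (for `S`
positive self-adjoint): the law of `m + S g` for a standard Gaussian `g`. -/
def gaussianOf [MeasurableSpace H] [BorelSpace H] (m : H) (S : H →L[ℝ] H) : Measure H :=
  Measure.map (fun x => m + S x) (stdGaussian H)

/-- Assumption 1: absorbing ball of radius `r`, local Lipschitz continuity and the
squeezing property for the dynamics `Ψ`, together with the properties of the
`V`-metric projection `Pr` onto the ball. -/
structure Assumption1 (Hob : H →L[ℝ] EuclideanSpace ℝ (Fin k)) (β r : ℝ)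
    (Ψ Pr : H → H) (L α : ℝ) : Prop where
  hHob : Hob.comp (ContinuousLinearMap.adjoint Hob)
      = ContinuousLinearMap.id ℝ (EuclideanSpace ℝ (Fin k))
  hβ : 0 ≤ β
  hr : 0 < r
  hΨB : ∀ u : H, ‖u‖ ≤ r → ‖Ψ u‖ ≤ r
  hL : 0 < L
  hLip : ∀ u v : H, ‖u‖ ≤ r → ‖v‖ ≤ r →
    Vnorm Hob β (Ψ u - Ψ v) ^ 2 ≤ L * Vnorm Hob β (u - v) ^ 2
  hα0 : 0 < α
  hα1 : α < 1
  hSqueeze : ∀ u v : H, ‖u‖ ≤ r → ‖v‖ ≤ r →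
    Vnorm Hob β ((Ψ u - Ψ v) - Pop Hob (Ψ u - Ψ v)) ^ 2 ≤ α * Vnorm Hob β (u - v) ^ 2
  hPrB : ∀ u : H, ‖Pr u‖ ≤ r
  hPrId : ∀ u : H, ‖u‖ ≤ r → Pr u = u
  hPrNonexp : ∀ u v : H, Vnorm Hob β (Pr u - Pr v) ≤ Vnorm Hob β (u - v)

/-- Index type for the collection of all random sources driving the filter:
the initial-ensemble Gaussians, the inflation noises, and the observation noises. -/
abbrev NoiseIdx (N : ℕ) : Type := Fin N ⊕ ((ℕ × Fin N) ⊕ ℕ)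

abbrev noiseType (H : Type) (k N : ℕ) : NoiseIdx N → Type :=
  fun i => match i with
  | .inl _ => H
  | .inr _ => EuclideanSpace ℝ (Fin k)

abbrev noiseMS (H : Type) [MeasurableSpace H] (k N : ℕ) :
    ∀ i : NoiseIdx N, MeasurableSpace (noiseType H k N i) :=
  fun i => match i with
  | .inl _ => ‹MeasurableSpace H›
  | .inr _ => inferInstance

/-- The combined family of random sources, used to state their mutual independence. -/
def noiseFun {Ω : Type*} {H : Type} {k N : ℕ}
    (g : Fin N → Ω → H) (ζ : ℕ → Fin N → Ω → EuclideanSpace ℝ (Fin k))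
    (η : ℕ → Ω → EuclideanSpace ℝ (Fin k)) :
    ∀ i : NoiseIdx N, Ω → noiseType H k N i :=
  fun i => match i with
  | .inl n => g n
  | .inr (.inl p) => ζ p.1 p.2
  | .inr (.inr j) => η j

/-- The σ-algebra generated by the initial ensemble, the inflation noises `ξ_i = √a Hob† ζ_i`
and the observations `y_i = Hob u_i + ε η_i` for `1 ≤ i ≤ j`. -/
def enkfFiltration {Ω : Type*} [MeasurableSpace H] {N : ℕ}
    (Hob : H →L[ℝ] EuclideanSpace ℝ (Fin k)) (u : ℕ → H) (ε : ℝ)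
    (g : Fin N → Ω → H) (ζ : ℕ → Fin N → Ω → EuclideanSpace ℝ (Fin k))
    (η : ℕ → Ω → EuclideanSpace ℝ (Fin k)) (j : ℕ) : MeasurableSpace Ω :=
  (⨆ n : Fin N, MeasurableSpace.comap (g n) ‹MeasurableSpace H›)
  ⊔ (⨆ i ∈ Set.Icc 1 j, ⨆ n : Fin N, MeasurableSpace.comap (ζ i n) inferInstance)
  ⊔ (⨆ i ∈ Set.Icc 1 j, MeasurableSpace.comap (fun ω => Hob (u i) + ε • η i ω) inferInstance)

/-- A realization of the square-root ensemble Kalman filter (Algorithm 1), with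
prediction map `Ψpred` (the true dynamics `Ψ`, or a surrogate `Ψˢ`), ball projection `Pr`,
signal `u`, noise covariance `R`, ensemble size `N`, initial mean/covariance `m0, C0`,
inflation parameter `a` and noise level `ε`, driven by observations
`y_j = Hob (u j) + ε • η_j`. -/
structure EnKFRun {H : Type} [NormedAddCommGroup H] [InnerProductSpace ℝ H]
    [FiniteDimensional ℝ H] [MeasurableSpace H] [BorelSpace H] {k : ℕ}
    (Hob : H →L[ℝ] EuclideanSpace ℝ (Fin k))
    (Ψpred Pr : H → H) (u : ℕ → H)
    (R : EuclideanSpace ℝ (Fin k) →L[ℝ] EuclideanSpace ℝ (Fin k))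
    (N : ℕ) (m0 : H) (C0 : H →L[ℝ] H) (a ε : ℝ)
    (Ω : Type) [MeasurableSpace Ω] (μ : Measure Ω) where
  /-- observation noises -/
  η : ℕ → Ω → EuclideanSpace ℝ (Fin k)
  /-- Gaussian sources for the initial ensemble -/
  g : Fin N → Ω → H
  /-- Gaussian sources for the inflation noises `ξ_j^(n) = √a • Hob† (ζ_j^(n))` -/
  ζ : ℕ → Fin N → Ω → EuclideanSpace ℝ (Fin k)
  /-- a square root of `C0` -/
  sqrtC0 : H →L[ℝ] H
  /-- analysis ensembles (`U 0` is the initial ensemble) -/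
  U : ℕ → Fin N → Ω → H
  /-- prediction ensembles -/
  v : ℕ → Fin N → Ω → H
  /-- prediction means `μ̂_j` -/
  μpred : ℕ → Ω → H
  /-- prediction covariances `Σ̂_j` -/
  Spred : ℕ → Ω → H →L[ℝ] H
  /-- analysis means `m̂_j` -/
  mhat : ℕ → Ω → H
  /-- analysis covariances `Ĉ_j` -/
  Chat : ℕ → Ω → H →L[ℝ] H
  hη_meas : ∀ j, Measurable (η j)
  hη_L2 : ∀ j, MemLp (η j) 2 μ
  hη_mean : ∀ j, ∫ ω, η j ω ∂μ = 0
  hη_cov : ∀ j, ∫ ω, outer (η j ω) (η j ω) ∂μ = R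
  hg_meas : ∀ n, Measurable (g n)
  hg_law : ∀ n, Measure.map (g n) μ = stdGaussian H
  hζ_meas : ∀ j n, Measurable (ζ j n)
  hζ_law : ∀ j n, Measure.map (ζ j n) μ = stdGaussian (EuclideanSpace ℝ (Fin k))
  hIndep : @iIndepFun _ _ _ _ (noiseMS H k N) (noiseFun g ζ η) μ
  hC0_sa : IsSelfAdjoint C0
  hC0_pos : ∀ x : H, 0 ≤ ⟪C0 x, x⟫
  hsqrt_sa : IsSelfAdjoint sqrtC0
  hsqrt_pos : ∀ x : H, 0 ≤ ⟪sqrtC0 x, x⟫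
  hsqrt_sq : sqrtC0.comp sqrtC0 = C0
  hU0 : ∀ n ω, U 0 n ω = m0 + sqrtC0 (g n ω)
  hv : ∀ j n ω, v (j + 1) n ω
      = Ψpred (Pr (U j n ω)) + Real.sqrt a • (ContinuousLinearMap.adjoint Hob) (ζ (j + 1) n ω)
  hμpred : ∀ j ω, μpred (j + 1) ω = (N : ℝ)⁻¹ • ∑ n, v (j + 1) n ω
  hSpred : ∀ j ω, Spred (j + 1) ω
      = (N : ℝ)⁻¹ • ∑ n, outer (v (j + 1) n ω - μpred (j + 1) ω) (v (j + 1) n ω - μpred (j + 1) ω)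
  hmhat0 : ∀ ω, mhat 0 ω = (N : ℝ)⁻¹ • ∑ n, U 0 n ω
  hmhat_mean : ∀ j ω, mhat (j + 1) ω = (N : ℝ)⁻¹ • ∑ n, U (j + 1) n ω
  hmhat_analysis : ∀ j ω, mhat (j + 1) ω = μpred (j + 1) ω
      + kalmanGain Hob R ε (Spred (j + 1) ω)
          ((Hob (u (j + 1)) + ε • η (j + 1) ω) - Hob (μpred (j + 1) ω))
  hChat_emp : ∀ j ω, Chat j ω
      = ((N : ℝ) - 1)⁻¹ • ∑ n, outer (U j n ω - mhat j ω) (U j n ω - mhat j ω)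
  hChat_analysis : ∀ j ω, Chat (j + 1) ω
      = ((ContinuousLinearMap.id ℝ H)
          - (kalmanGain Hob R ε (Spred (j + 1) ω)).comp Hob).comp (Spred (j + 1) ω)
  hAdapted : ∀ j n, @Measurable Ω H (enkfFiltration Hob u ε g ζ η j) _ (U j n)

/-- The mean-field (Gaussian projected) filter, Algorithm 3, driven by an observation
sequence `y`, with prediction map `Ψpred`, ball projection `Pr`, inflation `Q = a • P`
and noise level `ε`; `sqrtC j` is the positive self-adjoint square root of `C j`. -/
def IsMeanFieldRun [MeasurableSpace H] [BorelSpace H]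
    (Hob : H →L[ℝ] EuclideanSpace ℝ (Fin k))
    (Ψpred Pr : H → H)
    (R : EuclideanSpace ℝ (Fin k) →L[ℝ] EuclideanSpace ℝ (Fin k)) (a ε : ℝ)
    (y : ℕ → EuclideanSpace ℝ (Fin k))
    (m : ℕ → H) (C : ℕ → H →L[ℝ] H) (μm : ℕ → H) (Sm : ℕ → H →L[ℝ] H)
    (sqrtC : ℕ → H →L[ℝ] H) : Prop :=
  (∀ j, IsSelfAdjoint (C j)) ∧ (∀ j, ∀ x : H, 0 ≤ ⟪C j x, x⟫) ∧
  (∀ j, IsSelfAdjoint (sqrtC j)) ∧ (∀ j, ∀ x : H, 0 ≤ ⟪sqrtC j x, x⟫) ∧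
  (∀ j, (sqrtC j).comp (sqrtC j) = C j) ∧
  (∀ j, μm (j + 1) = ∫ x, Ψpred (Pr x) ∂(gaussianOf (m j) (sqrtC j))) ∧
  (∀ j, Sm (j + 1) = ∫ x, outer (Ψpred (Pr x) - μm (j + 1)) (Ψpred (Pr x) - μm (j + 1))
      ∂(gaussianOf (m j) (sqrtC j))) ∧
  (∀ j, m (j + 1) = μm (j + 1)
      + kalmanGain Hob R ε (Sm (j + 1) + a • Pop Hob) (y (j + 1) - Hob (μm (j + 1)))) ∧
  (∀ j, C (j + 1) = ((ContinuousLinearMap.id ℝ H)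
      - (kalmanGain Hob R ε (Sm (j + 1) + a • Pop Hob)).comp Hob).comp
        (Sm (j + 1) + a • Pop Hob))

end EnKF

namespace EnKF

set_option maxHeartbeats 1000000 in
/-- **V-norm bound on `P − K H` for the inflated Kalman gain (cf. equation (3.3)).**
For positive semidefinite self-adjoint `Σ`, positive semidefinite `R`, `ε ≥ 0`, `a > 0`,
`Q = a P` and `K = (Σ + Q) Hob† (Hob (Σ + Q) Hob† + ε² R)⁻¹`, one has, for every `v`,
`V((P − K Hob) v) ≤ ((√(1+β) ε² ‖R‖ + ‖Σ‖)/a) V(v)`. -/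
theorem vnorm_bound_P_minus_inflated_gain
    {H : Type*} [NormedAddCommGroup H] [InnerProductSpace ℝ H] [FiniteDimensional ℝ H]
    {k : ℕ} (Hob : H →L[ℝ] EuclideanSpace ℝ (Fin k))
    (hHob : Hob.comp (ContinuousLinearMap.adjoint Hob)
      = ContinuousLinearMap.id ℝ (EuclideanSpace ℝ (Fin k)))
    (β : ℝ) (hβ : 0 ≤ β)
    (Sig : H →L[ℝ] H) (hSig_sa : IsSelfAdjoint Sig) (hSig_pos : ∀ x : H, 0 ≤ ⟪Sig x, x⟫)
    (R : EuclideanSpace ℝ (Fin k) →L[ℝ] EuclideanSpace ℝ (Fin k))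
    (hR_sa : IsSelfAdjoint R) (hR_pos : ∀ x : EuclideanSpace ℝ (Fin k), 0 ≤ ⟪R x, x⟫)
    (ε a : ℝ) (hε : 0 ≤ ε) (ha : 0 < a) :
    ∀ v : H,
      Vnorm Hob β ((Pop Hob - (kalmanGain Hob R ε (Sig + a • Pop Hob)).comp Hob) v)
        ≤ ((Real.sqrt (1 + β) * ε ^ 2 * ‖R‖ + ‖Sig‖) / a) * Vnorm Hob β v := by
  intro v
  set A : EuclideanSpace ℝ (Fin k) →L[ℝ] H := ContinuousLinearMap.adjoint Hob with hAdef
  have hHA : ∀ y, Hob (A y) = y := fun y => ContinuousLinearMap.ext_iff.mp hHob y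
  have hAnorm : ∀ y, ‖A y‖ = ‖y‖ := by
    intro y
    have h1 : ⟪A y, A y⟫ = ⟪y, Hob (A y)⟫ :=
      ContinuousLinearMap.adjoint_inner_left Hob (A y) y
    rw [hHA, real_inner_self_eq_norm_sq, real_inner_self_eq_norm_sq] at h1
    calc ‖A y‖ = Real.sqrt (‖A y‖ ^ 2) := (Real.sqrt_sq (norm_nonneg _)).symm
      _ = Real.sqrt (‖y‖ ^ 2) := by rw [h1]
      _ = ‖y‖ := Real.sqrt_sq (norm_nonneg _)
  have hPapp : ∀ x : H, Pop Hob x = A (Hob x) := fun _ => rfl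
  have hHobnorm : ∀ x : H, ‖Hob x‖ ≤ ‖x‖ := by
    intro x
    have h1 : ⟪A (Hob x), x⟫ = ⟪Hob x, Hob x⟫ :=
      ContinuousLinearMap.adjoint_inner_left Hob x (Hob x)
    have h2 : ‖Hob x‖ ^ 2 ≤ ‖A (Hob x)‖ * ‖x‖ := by
      rw [← real_inner_self_eq_norm_sq, ← h1]
      exact real_inner_le_norm _ _
    rw [hAnorm] at h2
    nlinarith [norm_nonneg (Hob x), norm_nonneg x]
  have hPnorm : ∀ x : H, ‖Pop Hob x‖ ≤ ‖x‖ := by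
    intro x; rw [hPapp, hAnorm]; exact hHobnorm x
  -- (I - P) is a contraction
  have hQnorm : ∀ x : H, ‖Pop Hob x - x‖ ≤ ‖x‖ := by
    intro x
    have hip : ⟪x, Pop Hob x⟫ = ‖Hob x‖ ^ 2 := by
      rw [hPapp, real_inner_comm]
      rw [ContinuousLinearMap.adjoint_inner_left Hob x (Hob x), real_inner_self_eq_norm_sq]
    have hps : ‖Pop Hob x‖ ^ 2 = ‖Hob x‖ ^ 2 := by rw [hPapp, hAnorm]
    have hexp : ‖x - Pop Hob x‖ ^ 2 = ‖x‖ ^ 2 - 2 * ⟪x, Pop Hob x⟫ + ‖Pop Hob x‖ ^ 2 :=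
      @norm_sub_sq_real H _ _ x (Pop Hob x)
    rw [hip, hps] at hexp
    have h2 : ‖x - Pop Hob x‖ ^ 2 ≤ ‖x‖ ^ 2 := by nlinarith [sq_nonneg ‖Hob x‖]
    rw [norm_sub_rev] at h2
    nlinarith [norm_nonneg (Pop Hob x - x), norm_nonneg x]
  -- the matrix M and its inverse
  set S : H →L[ℝ] H := Sig + a • Pop Hob with hSdef
  set M : EuclideanSpace ℝ (Fin k) →L[ℝ] EuclideanSpace ℝ (Fin k) :=
    (Hob.comp (S.comp A)) + ε ^ 2 • R with hMdef
  have hMapp : ∀ y, M y = Hob (Sig (A y)) + a • y + ε ^ 2 • R y := by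
    intro y
    simp only [hMdef, hSdef, ContinuousLinearMap.add_apply, ContinuousLinearMap.comp_apply,
      ContinuousLinearMap.smul_apply, _root_.map_add, _root_.map_smul, hPapp, hHA]
  have hMinner : ∀ y, a * ‖y‖ ^ 2 ≤ ⟪M y, y⟫ := by
    intro y
    rw [hMapp]
    rw [inner_add_left, inner_add_left, inner_smul_left, inner_smul_left]
    have h1 : ⟪Hob (Sig (A y)), y⟫ = ⟪Sig (A y), A y⟫ := by
      rw [real_inner_comm, ← ContinuousLinearMap.adjoint_inner_left Hob (Sig (A y)) y,
        real_inner_comm]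
    rw [h1, real_inner_self_eq_norm_sq]
    have := hSig_pos (A y)
    have := hR_pos y
    have hε2 : (0:ℝ) ≤ ε ^ 2 := sq_nonneg ε
    simp only [RCLike.ofReal_real_eq_id, id_eq, starRingEnd_apply, star_trivial]
    nlinarith
  have hMinj : Function.Injective M := by
    intro x y hxy
    have h0 : M (x - y) = 0 := by rw [_root_.map_sub, hxy, sub_self]
    have h1 : a * ‖x - y‖ ^ 2 ≤ 0 := by
      have := hMinner (x - y); rw [h0, inner_zero_left] at this; linarith
    have h2 : ‖x - y‖ ^ 2 ≤ 0 := by nlinarith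
    have : ‖x - y‖ = 0 := by nlinarith [sq_nonneg ‖x - y‖, norm_nonneg (x - y)]
    rw [norm_eq_zero, sub_eq_zero] at this; exact this
  have hMsurj : Function.Surjective M := by
    have h := LinearMap.injective_iff_surjective (f := M.toLinearMap)
    exact h.mp hMinj
  have hUnit : IsUnit M := by
    let e : EuclideanSpace ℝ (Fin k) ≃ₗ[ℝ] EuclideanSpace ℝ (Fin k) :=
      LinearEquiv.ofBijective M.toLinearMap ⟨hMinj, hMsurj⟩
    let e' := e.toContinuousLinearEquiv
    refine ⟨⟨M, e'.symm.toContinuousLinearMap, ?_, ?_⟩, rfl⟩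
    · ext x
      have : M (e'.symm x) = e' (e'.symm x) := rfl
      simp [ContinuousLinearMap.mul_apply, this]
    · ext x
      have : M x = e' x := rfl
      simp [ContinuousLinearMap.mul_apply, this]
  set N : EuclideanSpace ℝ (Fin k) →L[ℝ] EuclideanSpace ℝ (Fin k) := Ring.inverse M with hNdef
  have hMN : ∀ y, M (N y) = y := by
    intro y
    have h := Ring.mul_inverse_cancel M hUnit
    have := ContinuousLinearMap.ext_iff.mp h y
    simpa [ContinuousLinearMap.mul_apply] using this
  have hNbound : ∀ y, a * ‖N y‖ ≤ ‖y‖ := by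
    intro y
    have h1 : a * ‖N y‖ ^ 2 ≤ ⟪M (N y), N y⟫ := hMinner (N y)
    rw [hMN] at h1
    have h2 : ⟪y, N y⟫ ≤ ‖y‖ * ‖N y‖ := real_inner_le_norm _ _
    rcases eq_or_lt_of_le (norm_nonneg (N y)) with h | h
    · rw [← h]; simpa using norm_nonneg y
    · have h3 := le_trans h1 h2
      rw [pow_two] at h3
      nlinarith [h3, h]
  -- the key algebraic identity
  set w : EuclideanSpace ℝ (Fin k) := N (Hob v) with hwdef
  set u1 : H := Pop Hob (Sig (A w)) - Sig (A w) with hu1def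
  set u2 : H := ε ^ 2 • A (R w) with hu2def
  have key : (Pop Hob - (kalmanGain Hob R ε S).comp Hob) v = u1 + u2 := by
    have h1 : M w = Hob v := hMN _
    have h2 : a • w = Hob v - Hob (Sig (A w)) - ε ^ 2 • R w := by
      have h3 := hMapp w
      rw [h1] at h3
      rw [eq_comm, sub_sub, sub_eq_iff_eq_add]
      rw [h3]; abel
    have hK : (kalmanGain Hob R ε S).comp Hob v = Sig (A w) + a • A w := by
      simp only [kalmanGain, ContinuousLinearMap.comp_apply, ← hMdef, ← hNdef, ← hAdef, ← hwdef]
      simp only [hSdef, ContinuousLinearMap.add_apply, ContinuousLinearMap.smul_apply, hPapp, hHA]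
    have haw : a • A w = A (Hob v) - Pop Hob (Sig (A w)) - ε ^ 2 • A (R w) := by
      rw [← _root_.map_smul, h2]
      simp only [_root_.map_sub, _root_.map_smul, hPapp]
    simp only [ContinuousLinearMap.sub_apply, hK, hu1def, hu2def, haw, hPapp]
    abel
  -- P u1 = 0
  have hPu1 : Pop Hob u1 = 0 := by
    simp only [hu1def, _root_.map_sub, hPapp, hHA, sub_self, _root_.map_zero]
  -- norm bounds
  have hwb : ‖w‖ ≤ ‖v‖ / a := by
    have := hNbound (Hob v)
    have := hHobnorm v
    rw [hwdef]
    rw [le_div_iff₀ ha, mul_comm]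
    linarith
  have hu1b : ‖u1‖ ≤ ‖Sig‖ / a * ‖v‖ := by
    have h1 : ‖u1‖ ≤ ‖Sig (A w)‖ := hQnorm (Sig (A w))
    have h2 : ‖Sig (A w)‖ ≤ ‖Sig‖ * ‖A w‖ := Sig.le_opNorm _
    rw [hAnorm] at h2
    have h3 : ‖Sig‖ * ‖w‖ ≤ ‖Sig‖ * (‖v‖ / a) :=
      mul_le_mul_of_nonneg_left hwb (norm_nonneg _)
    calc ‖u1‖ ≤ ‖Sig‖ * (‖v‖ / a) := by linarith
      _ = ‖Sig‖ / a * ‖v‖ := by ring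
  have hu2b : ‖u2‖ ≤ ε ^ 2 * ‖R‖ / a * ‖v‖ := by
    rw [hu2def, norm_smul, hAnorm]
    have h2 : ‖R w‖ ≤ ‖R‖ * ‖w‖ := R.le_opNorm _
    have h3 : ‖R‖ * ‖w‖ ≤ ‖R‖ * (‖v‖ / a) :=
      mul_le_mul_of_nonneg_left hwb (norm_nonneg _)
    have h4 : ‖(ε ^ 2 : ℝ)‖ = ε ^ 2 := by
      rw [Real.norm_eq_abs, abs_of_nonneg (sq_nonneg ε)]
    rw [h4]
    have := sq_nonneg ε
    calc ε ^ 2 * ‖R w‖ ≤ ε ^ 2 * (‖R‖ * (‖v‖ / a)) := by nlinarith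
      _ = ε ^ 2 * ‖R‖ / a * ‖v‖ := by ring
  -- Vnorm estimate
  set s : ℝ := Real.sqrt (1 + β) with hsdef
  have hs1 : 1 ≤ s := by
    have h := Real.sqrt_le_sqrt (show (1:ℝ) ≤ 1 + β by linarith)
    rwa [Real.sqrt_one] at h
  have hs2 : s ^ 2 = 1 + β := Real.sq_sqrt (by linarith)
  have hVle : Vnorm Hob β (u1 + u2) ≤ ‖u1‖ + s * ‖u2‖ := by
    rw [Vnorm]
    have hP12 : Pop Hob (u1 + u2) = Pop Hob u2 := by rw [_root_.map_add, hPu1, zero_add]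
    rw [hP12]
    have hb1 : ‖u1 + u2‖ ≤ ‖u1‖ + ‖u2‖ := norm_add_le _ _
    have hb2 : ‖Pop Hob u2‖ ≤ ‖u2‖ := hPnorm u2
    have hrhs : 0 ≤ ‖u1‖ + s * ‖u2‖ := by positivity
    rw [show ‖u1‖ + s * ‖u2‖ = Real.sqrt ((‖u1‖ + s * ‖u2‖) ^ 2) from
      (Real.sqrt_sq hrhs).symm]
    apply Real.sqrt_le_sqrt
    have e1 : ‖u1 + u2‖ ^ 2 ≤ (‖u1‖ + ‖u2‖) ^ 2 :=
      pow_le_pow_left₀ (norm_nonneg _) hb1 2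
    have e2 : ‖Pop Hob u2‖ ^ 2 ≤ ‖u2‖ ^ 2 :=
      pow_le_pow_left₀ (norm_nonneg _) hb2 2
    have gen : ∀ x y p q : ℝ, 0 ≤ p → 0 ≤ q → x ^ 2 ≤ (p + q) ^ 2 → y ^ 2 ≤ q ^ 2 →
        x ^ 2 + β * y ^ 2 ≤ (p + s * q) ^ 2 := by
      intro x y p q hp hq hx hy
      nlinarith [hs1, hs2, mul_nonneg hp hq, hβ]
    exact gen _ _ _ _ (norm_nonneg u1) (norm_nonneg u2) e1 e2
  have hvV : ‖v‖ ≤ Vnorm Hob β v := by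
    rw [Vnorm, Real.le_sqrt (norm_nonneg v)]
    have h0 : 0 ≤ β * ‖(Pop Hob) v‖ ^ 2 := by positivity
    · linarith
    · positivity
  rw [key]
  calc Vnorm Hob β (u1 + u2) ≤ ‖u1‖ + s * ‖u2‖ := hVle
    _ ≤ ‖Sig‖ / a * ‖v‖ + s * (ε ^ 2 * ‖R‖ / a * ‖v‖) := by
        have := mul_le_mul_of_nonneg_left hu2b (le_trans zero_le_one hs1)
        linarith
    _ = ((s * ε ^ 2 * ‖R‖ + ‖Sig‖) / a) * ‖v‖ := by ring
    _ ≤ ((s * ε ^ 2 * ‖R‖ + ‖Sig‖) / a) * Vnorm Hob β v := by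
        apply mul_le_mul_of_nonneg_left hvV
        apply div_nonneg ?_ (le_of_lt ha)
        have h0 : 0 ≤ s * ε ^ 2 * ‖R‖ := by positivity
        have := norm_nonneg Sig
        linarith


end EnKF
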